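/- arXiv:math/0209052 — 3 statements merged into one kernel-verified Lean document; each statement's English description precedes it below -/
import Mathlib

section
/- Let h : ℝ² → ℝ and f : ℝ^{2n-2} → ℝ be smooth, viewed as functions on ℝ^{2n} depending only on the first two and last 2n-2 coordinates respectively, with Hamiltonian flows φ_t on ℝ² and η_s on ℝ^{2n-2}. Then the Hamiltonian flow ν_t of the product function (x,z) ↦ h(x)f(z) on ℝ^{2n} satisfies ν_t(x,z) = (φ_{t f(z)}(x), η_{t h(x)}(z)) for all x ∈ ℝ², z ∈ ℝ^{2n-2}. -/
open scoped BigOperators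

/-- The standard area (symplectic) form on `ℝ²`. -/
def omega2 (v w : ℝ × ℝ) : ℝ := v.1 * w.2 - v.2 * w.1

/-- The standard symplectic form `ω₀` on `(ℝ²)^k ≅ ℝ^{2k}`. -/
def omegaN {k : ℕ} (v w : Fin k → ℝ × ℝ) : ℝ := ∑ i, omega2 (v i) (w i)

/-- The standard symplectic form on `ℝ² × ℝ^{2k} ≅ ℝ^{2k+2}`. -/
def omegaP {k : ℕ} (v w : (ℝ × ℝ) × (Fin k → ℝ × ℝ)) : ℝ :=
  omega2 v.1 w.1 + omegaN v.2 w.2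

lemma omega2_self (a : ℝ × ℝ) : omega2 a a = 0 := by simp [omega2]; ring

lemma omega2_zero_right (a : ℝ × ℝ) : omega2 a 0 = 0 := by simp [omega2]

lemma omegaN_self {k : ℕ} (a : Fin k → ℝ × ℝ) : omegaN a a = 0 := by
  simp [omegaN, omega2_self]

lemma omegaN_zero_right {k : ℕ} (a : Fin k → ℝ × ℝ) : omegaN a 0 = 0 := by
  simp [omegaN, omega2_zero_right]

lemma omega2_smul (c : ℝ) (a v : ℝ × ℝ) : omega2 (c • a) v = c * omega2 a v := by
  simp [omega2]; ring

lemma omegaN_smul {k : ℕ} (c : ℝ) (a v : Fin k → ℝ × ℝ) :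
    omegaN (c • a) v = c * omegaN a v := by
  simp [omegaN, Pi.smul_apply, omega2_smul, Finset.mul_sum]

lemma omega2_nondeg {a b : ℝ × ℝ} (H : ∀ v, omega2 a v = omega2 b v) : a = b := by
  have h1 := H (0, 1); have h2 := H (1, 0)
  simp [omega2] at h1 h2
  exact Prod.ext h1 h2

lemma omegaN_single {k : ℕ} (a : Fin k → ℝ × ℝ) (i : Fin k) (w : ℝ × ℝ) :
    omegaN a (Pi.single i w) = omega2 (a i) w := by
  unfold omegaN
  rw [Finset.sum_eq_single i]
  · simp
  · intro j _ hj; simp [Pi.single_eq_of_ne hj, omega2_zero_right]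
  · intro hi; exact absurd (Finset.mem_univ i) hi

lemma omegaN_nondeg {k : ℕ} {a b : Fin k → ℝ × ℝ}
    (H : ∀ v, omegaN a v = omegaN b v) : a = b := by
  funext i
  apply omega2_nondeg
  intro w
  rw [← omegaN_single a i w, ← omegaN_single b i w]
  exact H _

/-- if `φ`, `η` are the Hamiltonian flows of `h : ℝ² → ℝ` and
`f : ℝ^{2k} → ℝ`, then the Hamiltonian flow `ν` of the product function
`(x,z) ↦ h x * f z` on `ℝ^{2k+2}` satisfies
`ν t (x,z) = (φ (t * f z) x, η (t * h x) z)`. -/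
theorem stmt0 (k : ℕ)
    (h : ℝ × ℝ → ℝ) (f : (Fin k → ℝ × ℝ) → ℝ)
    (hh : ContDiff ℝ (⊤ : ℕ∞) h) (hf : ContDiff ℝ (⊤ : ℕ∞) f)
    -- Hamiltonian vector field of `h` on `ℝ²`:
    (Zh : ℝ × ℝ → ℝ × ℝ)
    (hZh : ∀ x v, omega2 (Zh x) v = fderiv ℝ h x v)
    -- Hamiltonian vector field of `f` on `ℝ^{2k}`:
    (Zf : (Fin k → ℝ × ℝ) → (Fin k → ℝ × ℝ))
    (hZf : ∀ z v, omegaN (Zf z) v = fderiv ℝ f z v)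
    -- Hamiltonian flow of `h`:
    (φ : ℝ → ℝ × ℝ → ℝ × ℝ)
    (hφ0 : ∀ x, φ 0 x = x)
    (hφ : ∀ t x, HasDerivAt (fun s => φ s x) (Zh (φ t x)) t)
    -- Hamiltonian flow of `f`:
    (η : ℝ → (Fin k → ℝ × ℝ) → (Fin k → ℝ × ℝ))
    (hη0 : ∀ z, η 0 z = z)
    (hη : ∀ t z, HasDerivAt (fun s => η s z) (Zf (η t z)) t)
    -- Hamiltonian vector field of the product function `h·f`:
    (Z : (ℝ × ℝ) × (Fin k → ℝ × ℝ) → (ℝ × ℝ) × (Fin k → ℝ × ℝ))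
    (hZ : ∀ p v, omegaP (Z p) v = fderiv ℝ (fun q => h q.1 * f q.2) p v)
    -- Hamiltonian flow of the product function:
    (ν : ℝ → (ℝ × ℝ) × (Fin k → ℝ × ℝ) → (ℝ × ℝ) × (Fin k → ℝ × ℝ))
    (hν0 : ∀ p, ν 0 p = p)
    (hν : ∀ t p, HasDerivAt (fun s => ν s p) (Z (ν t p)) t) :
    ∀ (t : ℝ) (x : ℝ × ℝ) (z : Fin k → ℝ × ℝ),
      ν t (x, z) = (φ (t * f z) x, η (t * h x) z) := by
  have hhd : Differentiable ℝ h := hh.differentiable (by simp)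
  have hfd : Differentiable ℝ f := hf.differentiable (by simp)
  -- explicit formula for Zh
  have Zh_eq : Zh = fun x => (fderiv ℝ h x (0, 1), -(fderiv ℝ h x (1, 0))) := by
    funext x
    have h1 := hZh x (0, 1); have h2 := hZh x (1, 0)
    simp [omega2] at h1 h2
    exact Prod.ext h1 (show (Zh x).2 = -(fderiv ℝ h x (1, 0)) by linarith)
  have Zh_smooth : ContDiff ℝ (⊤ : ℕ∞) Zh := by
    rw [Zh_eq]
    have hD : ContDiff ℝ (⊤ : ℕ∞) (fun x => fderiv ℝ h x) := hh.fderiv_right (by simp)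
    exact ContDiff.prodMk (hD.clm_apply contDiff_const) (ContDiff.neg (hD.clm_apply contDiff_const))
  -- explicit formula for Zf
  have Zf_eq : Zf = fun z i =>
      (fderiv ℝ f z (Pi.single i (0, 1)), -(fderiv ℝ f z (Pi.single i (1, 0)))) := by
    funext z i
    have h1 := hZf z (Pi.single i (0, 1)); have h2 := hZf z (Pi.single i (1, 0))
    rw [omegaN_single] at h1 h2
    simp [omega2] at h1 h2
    exact Prod.ext h1 (show (Zf z i).2 = -(fderiv ℝ f z (Pi.single i (1, 0))) by linarith)
  have Zf_smooth : ContDiff ℝ (⊤ : ℕ∞) Zf := by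
    rw [Zf_eq]
    have hD : ContDiff ℝ (⊤ : ℕ∞) (fun z => fderiv ℝ f z) := hf.fderiv_right (by simp)
    exact contDiff_pi.mpr fun i =>
      ContDiff.prodMk (hD.clm_apply contDiff_const) (ContDiff.neg (hD.clm_apply contDiff_const))
  -- fderiv of the product function
  have prod_fderiv : ∀ (p v : (ℝ × ℝ) × (Fin k → ℝ × ℝ)),
      fderiv ℝ (fun q => h q.1 * f q.2) p v
        = f p.2 * fderiv ℝ h p.1 v.1 + h p.1 * fderiv ℝ f p.2 v.2 := by
    intro p v
    have H1 : HasFDerivAt (fun q : (ℝ × ℝ) × (Fin k → ℝ × ℝ) => h q.1)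
        ((fderiv ℝ h p.1).comp (ContinuousLinearMap.fst ℝ _ _)) p :=
      (hhd p.1).hasFDerivAt.comp p hasFDerivAt_fst
    have H2 : HasFDerivAt (fun q : (ℝ × ℝ) × (Fin k → ℝ × ℝ) => f q.2)
        ((fderiv ℝ f p.2).comp (ContinuousLinearMap.snd ℝ _ _)) p :=
      (hfd p.2).hasFDerivAt.comp p hasFDerivAt_snd
    rw [show (fun q : (ℝ × ℝ) × (Fin k → ℝ × ℝ) => h q.1 * f q.2) = (fun q => h q.1) * (fun q => f q.2) from rfl,
      (H1.mul H2).fderiv]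
    simp [ContinuousLinearMap.add_apply, ContinuousLinearMap.smul_apply,
      ContinuousLinearMap.comp_apply, smul_eq_mul]
    ring
  -- decomposition of Z
  have Z_eq : Z = fun p => (f p.2 • Zh p.1, h p.1 • Zf p.2) := by
    funext p
    refine Prod.ext ?_ ?_
    · apply omega2_nondeg
      intro v
      have hv := hZ p (v, 0)
      rw [prod_fderiv] at hv
      simp only [omegaP, omegaN_zero_right, add_zero, map_zero, mul_zero] at hv
      rw [hv, omega2_smul, ← hZh]
    · apply omegaN_nondeg
      intro v
      have hv := hZ p (0, v)
      rw [prod_fderiv] at hv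
      simp only [omegaP, map_zero, mul_zero, zero_add] at hv
      have : omegaN (Z p).2 v = h p.1 * fderiv ℝ f p.2 v := by
        have h0 : omega2 (Z p).1 0 = 0 := omega2_zero_right _
        linarith [hv, h0]
      rw [this, omegaN_smul, ← hZf]
  have Z_smooth : ContDiff ℝ (⊤ : ℕ∞) Z := by
    rw [Z_eq]
    exact ContDiff.prodMk ((hf.comp contDiff_snd).smul (Zh_smooth.comp contDiff_fst))
      ((hh.comp contDiff_fst).smul (Zf_smooth.comp contDiff_snd))
  -- conservation of h along φ
  have hcons : ∀ s x, h (φ s x) = h x := by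
    intro s x
    have d : ∀ t, HasDerivAt (fun u => h (φ u x)) 0 t := by
      intro t
      have := (hhd (φ t x)).hasFDerivAt.comp_hasDerivAt t (hφ t x)
      rwa [← hZh, omega2_self] at this
    have := is_const_of_deriv_eq_zero (fun t => (d t).differentiableAt)
      (fun t => (d t).deriv) s 0
    rwa [hφ0] at this
  -- conservation of f along η
  have fcons : ∀ s z, f (η s z) = f z := by
    intro s z
    have d : ∀ t, HasDerivAt (fun u => f (η u z)) 0 t := by
      intro t
      have := (hfd (η t z)).hasFDerivAt.comp_hasDerivAt t (hη t z)
      rwa [← hZf, omegaN_self] at this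
    have := is_const_of_deriv_eq_zero (fun t => (d t).differentiableAt)
      (fun t => (d t).deriv) s 0
    rwa [hη0] at this
  -- main argument
  intro T x z
  set γ : ℝ → (ℝ × ℝ) × (Fin k → ℝ × ℝ) :=
    fun t => (φ (t * f z) x, η (t * h x) z) with hγ
  have γderiv : ∀ t, HasDerivAt γ (Z (γ t)) t := by
    intro t
    have d1 : HasDerivAt (fun s => φ (s * f z) x) ((f z) • Zh (φ (t * f z) x)) t :=
      by have := HasDerivAt.scomp t (hφ (t * f z) x) (hasDerivAt_mul_const (f z)); exact this
    have d2 : HasDerivAt (fun s => η (s * h x) z) ((h x) • Zf (η (t * h x) z)) t :=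
      by have := HasDerivAt.scomp t (hη (t * h x) z) (hasDerivAt_mul_const (h x)); exact this
    have key : Z (γ t) = ((f z) • Zh (φ (t * f z) x), (h x) • Zf (η (t * h x) z)) := by
      rw [Z_eq]
      simp only [hγ]
      rw [fcons, hcons]
    rw [key]
    exact HasDerivAt.prodMk d1 d2
  have gderiv : ∀ t, HasDerivAt (fun s => ν s (x, z)) (Z (ν t (x, z))) t :=
    fun t => hν t (x, z)
  set b : ℝ := |T| + 1 with hb
  have hb0 : (0 : ℝ) < b := by positivity
  have cg : Continuous (fun s => ν s (x, z)) :=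
    continuous_iff_continuousAt.mpr fun t => (gderiv t).continuousAt
  have cγ : Continuous γ :=
    continuous_iff_continuousAt.mpr fun t => (γderiv t).continuousAt
  have hcpt : IsCompact ((fun s => ν s (x, z)) '' Set.Icc (-b) b ∪ γ '' Set.Icc (-b) b) :=
    (isCompact_Icc.image cg).union (isCompact_Icc.image cγ)
  obtain ⟨R, hR⟩ := hcpt.isBounded.subset_closedBall 0
  obtain ⟨C, hC⟩ := (isCompact_closedBall
      (0 : (ℝ × ℝ) × (Fin k → ℝ × ℝ)) R).exists_bound_of_continuousOn
    ((Z_smooth.fderiv_right (m := (⊤ : ℕ∞)) (by simp)).continuous.continuousOn)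
  set K : NNReal := ⟨max C 0, le_max_right _ _⟩ with hK
  have lip : LipschitzOnWith K Z (Metric.closedBall 0 R) := by
    have bound : ∀ p ∈ Metric.closedBall (0 : (ℝ × ℝ) × (Fin k → ℝ × ℝ)) R,
        ‖fderiv ℝ Z p‖₊ ≤ K := by
      intro p hp
      have h1 := hC p hp
      rw [← NNReal.coe_le_coe]
      simp only [coe_nnnorm, hK, NNReal.coe_mk]
      exact le_trans h1 (le_max_left _ _)
    exact Convex.lipschitzOnWith_of_nnnorm_fderiv_le
      (fun p _ => (Z_smooth.differentiable (by simp)).differentiableAt)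
      bound (convex_closedBall _ _)
  have heq0 : ν 0 (x, z) = γ 0 := by
    rw [hν0]
    simp [hγ, hφ0, hη0]
  have equal : Set.EqOn (fun s => ν s (x, z)) γ (Set.Icc (-b) b) := by
    apply ODE_solution_unique_of_mem_Icc (v := fun _ => Z)
      (s := fun _ => Metric.closedBall 0 R) (fun _ _ => lip)
      (Set.mem_Ioo.mpr ⟨by linarith, hb0⟩)
      cg.continuousOn (fun t _ => gderiv t)
      (fun t ht => hR (Or.inl ⟨t, Set.Ioo_subset_Icc_self ht, rfl⟩))
      cγ.continuousOn (fun t _ => γderiv t)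
      (fun t ht => hR (Or.inr ⟨t, Set.Ioo_subset_Icc_self ht, rfl⟩))
      heq0
  exact equal ⟨by linarith [neg_abs_le T], by linarith [le_abs_self T]⟩
end

section
/- Let Ψ be a symplectomorphism of an open star-shaped bounded set Ω ⊂ ℝ^{2n} (star-shaped with respect to 0) equal to the identity near ∂Ω, and suppose Ψ_t, t ∈ [0,1], is an isotopy through symplectomorphisms with compact support contained in aΩ for some a ≥ 1, with Ψ_0 = Id and Ψ_1 = Ψ. Then Ψ is strictly isotopic to the identity in Ω, i.e. there is a 1-parameter family φ_t of symplectomorphisms of Ω equal to the identity near ∂Ω with φ_0 = Id and φ_1 = Ψ. (The isotopy is given by concatenating φ_t(x) = (1/a)Ψ_t(ax) with ζ_t(x) = Ψ((a(1-t)+t)x)/(a(1-t)+t).) -/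
open scoped BigOperators Pointwise

/-- A symplectomorphism of `(ℝ^{2k}, ω₀)`. -/
def IsSymplectomorph {k : ℕ} (φ : (Fin k → ℝ × ℝ) → (Fin k → ℝ × ℝ)) : Prop :=
  ContDiff ℝ (⊤ : ℕ∞) φ ∧ Function.Bijective φ ∧ ContDiff ℝ (⊤ : ℕ∞) (Function.invFun φ) ∧
    ∀ x v w, omegaN (fderiv ℝ φ x v) (fderiv ℝ φ x w) = omegaN v w

lemma omega2_smul_left (s : ℝ) (v w : ℝ × ℝ) : omega2 (s • v) w = s * omega2 v w := by
  simp [omega2, Prod.smul_fst, Prod.smul_snd, smul_eq_mul]; ring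

lemma omega2_smul_right (s : ℝ) (v w : ℝ × ℝ) : omega2 v (s • w) = s * omega2 v w := by
  simp [omega2, Prod.smul_fst, Prod.smul_snd, smul_eq_mul]; ring

lemma omegaN_smul_left {k : ℕ} (s : ℝ) (v w : Fin k → ℝ × ℝ) :
    omegaN (s • v) w = s * omegaN v w := by
  simp [omegaN, Pi.smul_apply, omega2_smul_left, Finset.mul_sum]

lemma omegaN_smul_right {k : ℕ} (s : ℝ) (v w : Fin k → ℝ × ℝ) :
    omegaN v (s • w) = s * omegaN v w := by
  simp [omegaN, Pi.smul_apply, omega2_smul_right, Finset.mul_sum]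

lemma isSymplecto_conj {k : ℕ} (c : ℝ) (hc : c ≠ 0)
    (φ : (Fin k → ℝ × ℝ) → (Fin k → ℝ × ℝ)) (h : IsSymplectomorph φ) :
    IsSymplectomorph (fun x => c⁻¹ • φ (c • x)) := by
  obtain ⟨hsm, hbij, hinv, homega⟩ := h
  have hφdiff : Differentiable ℝ φ := hsm.differentiable (by simp)
  set g : (Fin k → ℝ × ℝ) → (Fin k → ℝ × ℝ) := fun y => c⁻¹ • Function.invFun φ (c • y) with hg
  have hL : Function.LeftInverse (Function.invFun φ) φ := Function.leftInverse_invFun hbij.1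
  have hR : Function.RightInverse (Function.invFun φ) φ := Function.rightInverse_invFun hbij.2
  have hgf : ∀ x, g (c⁻¹ • φ (c • x)) = x := by
    intro x
    simp only [hg, smul_smul, mul_inv_cancel₀ hc, one_smul, hL (c • x),
      inv_mul_cancel₀ hc]
  have hfg : ∀ x, c⁻¹ • φ (c • g x) = x := by
    intro x
    simp only [hg, smul_smul, mul_inv_cancel₀ hc, one_smul, hR (c • x),
      inv_mul_cancel₀ hc]
  have hbij' : Function.Bijective (fun x => c⁻¹ • φ (c • x)) :=
    Function.bijective_iff_has_inverse.mpr ⟨g, fun x => hgf x, fun x => hfg x⟩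
  have hinveq : Function.invFun (fun x => c⁻¹ • φ (c • x)) = g := by
    funext y
    apply hbij'.1
    show c⁻¹ • φ (c • _) = c⁻¹ • φ (c • _)
    rw [hfg y, Function.invFun_eq (hbij'.2 y)]
  refine ⟨(hsm.comp (contDiff_id.const_smul c)).const_smul c⁻¹, hbij', ?_, ?_⟩
  · rw [hinveq]
    exact (hinv.comp (contDiff_id.const_smul c)).const_smul c⁻¹
  · intro x v w
    have hfd : ∀ u, fderiv ℝ (fun x => c⁻¹ • φ (c • x)) x u
        = c⁻¹ • (fderiv ℝ φ (c • x)) (c • u) := by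
      intro u
      have h1 : HasFDerivAt (fun z : Fin k → ℝ × ℝ => c • z)
          (c • ContinuousLinearMap.id ℝ (Fin k → ℝ × ℝ)) x :=
        (hasFDerivAt_id x).const_smul c
      have h2 : HasFDerivAt φ (fderiv ℝ φ (c • x)) (c • x) :=
        (hφdiff (c • x)).hasFDerivAt
      have h3 := (h2.comp x h1).const_smul c⁻¹
      have h3' : HasFDerivAt (fun x => c⁻¹ • φ (c • x))
          (c⁻¹ • (fderiv ℝ φ (c • x)).comp (c • ContinuousLinearMap.id ℝ (Fin k → ℝ × ℝ))) x := h3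
      rw [h3'.fderiv]
      simp
    rw [hfd v, hfd w, omegaN_smul_left, omegaN_smul_right, homega, omegaN_smul_left,
      omegaN_smul_right]
    field_simp

lemma conj_support {k : ℕ} (c : ℝ) (hc : c ≠ 0)
    (φ : (Fin k → ℝ × ℝ) → (Fin k → ℝ × ℝ)) (K : Set (Fin k → ℝ × ℝ))
    (hs : ∀ x ∉ K, φ x = x) : ∀ x ∉ c⁻¹ • K, c⁻¹ • φ (c • x) = x := by
  intro x hx
  have hcx : c • x ∉ K := by
    intro h'
    exact hx ⟨c • x, h', by simp [smul_smul, inv_mul_cancel₀ hc]⟩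
  rw [hs _ hcx, smul_smul, inv_mul_cancel₀ hc, one_smul]

lemma image_eq_of_support {α : Type*} {f : α → α} (hbij : Function.Bijective f)
    {K S : Set α} (hKS : K ⊆ S) (hs : ∀ x ∉ K, f x = x) : f '' S = S := by
  ext y; constructor
  · rintro ⟨x, hx, rfl⟩
    by_contra hfx
    have h1 : f x ∉ K := fun h => hfx (hKS h)
    have h2 : f (f x) = f x := hs _ h1
    exact hfx (by rw [hbij.1 h2]; exact hx)
  · intro hy
    obtain ⟨x, rfl⟩ := hbij.2 y
    refine ⟨x, ?_, rfl⟩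
    by_contra hx
    have hxK : x ∉ K := fun h => hx (hKS h)
    rw [hs x hxK] at hy; exact hx hy

noncomputable def clampI (t : ℝ) : ℝ := max 0 (min t 1)

lemma clampI_mem (t : ℝ) : 0 ≤ clampI t ∧ clampI t ≤ 1 :=
  ⟨le_max_left _ _, max_le (by norm_num) (min_le_right _ _)⟩

lemma clampI_cont : Continuous clampI :=
  continuous_const.max (continuous_id.min continuous_const)

noncomputable def cFun (a t : ℝ) : ℝ := a * (2 - 2 * clampI t) + (2 * clampI t - 1)

lemma cFun_ge (a t : ℝ) (ha : 1 ≤ a) : 1 ≤ cFun a t := by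
  obtain ⟨h0, h1⟩ := clampI_mem t
  unfold cFun; nlinarith

lemma cFun_cont (a : ℝ) : Continuous (cFun a) := by
  unfold cFun
  exact (continuous_const.mul (continuous_const.sub (continuous_const.mul clampI_cont))).add
    ((continuous_const.mul clampI_cont).sub continuous_const)
noncomputable def fam {k : ℕ} (a : ℝ) (Ψt : ℝ → (Fin k → ℝ × ℝ) → (Fin k → ℝ × ℝ))
    (Ψ : (Fin k → ℝ × ℝ) → (Fin k → ℝ × ℝ)) (t : ℝ) (x : Fin k → ℝ × ℝ) : Fin k → ℝ × ℝ :=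
  if clampI t ≤ 1/2 then a⁻¹ • Ψt (2 * clampI t) (a • x)
  else (cFun a t)⁻¹ • Ψ (cFun a t • x)


/-- let `Ω ⊂ ℝ^{2k}` be open, bounded and star-shaped with respect to `0`,
and let `Ψ` be a symplectomorphism equal to the identity outside a compact subset of `Ω`.
Suppose `Ψ_t` is an isotopy through symplectomorphisms with compact support contained in
`aΩ` for some `a ≥ 1`, with `Ψ_0 = id` and `Ψ_1 = Ψ`.  Then `Ψ` is strictly isotopic to
the identity in `Ω`: there is a continuous family `φ_t` of symplectomorphisms equal to
the identity outside a compact subset of `Ω` (in particular mapping `Ω` onto `Ω`) with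
`φ_0 = id` and `φ_1 = Ψ`. -/
theorem stmt3 (k : ℕ) (Ω : Set (Fin k → ℝ × ℝ))
    (hΩopen : IsOpen Ω) (hΩbdd : Bornology.IsBounded Ω)
    (hstar : ∀ x ∈ Ω, ∀ t : ℝ, t ∈ Set.Icc (0 : ℝ) 1 → t • x ∈ Ω)
    (Ψ : (Fin k → ℝ × ℝ) → (Fin k → ℝ × ℝ))
    (hΨsymp : IsSymplectomorph Ψ)
    (KΨ : Set (Fin k → ℝ × ℝ)) (hKΨ : IsCompact KΨ) (hKΨΩ : KΨ ⊆ Ω)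
    (hΨsupp : ∀ x ∉ KΨ, Ψ x = x)
    (a : ℝ) (ha : 1 ≤ a)
    (Ψt : ℝ → (Fin k → ℝ × ℝ) → (Fin k → ℝ × ℝ))
    (hΨtcont : Continuous fun p : ℝ × (Fin k → ℝ × ℝ) => Ψt p.1 p.2)
    (K : Set (Fin k → ℝ × ℝ)) (hK : IsCompact K) (hKa : K ⊆ a • Ω)
    (hΨtsupp : ∀ t, ∀ x ∉ K, Ψt t x = x)
    (hΨtsymp : ∀ t, IsSymplectomorph (Ψt t))
    (h0 : Ψt 0 = id) (h1 : Ψt 1 = Ψ) :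
    ∃ φ : ℝ → (Fin k → ℝ × ℝ) → (Fin k → ℝ × ℝ),
      (Continuous fun p : ℝ × (Fin k → ℝ × ℝ) => φ p.1 p.2) ∧
      φ 0 = id ∧ φ 1 = Ψ ∧
      (∀ t, IsSymplectomorph (φ t)) ∧
      (∀ t, φ t '' Ω = Ω) ∧
      ∀ t, ∃ K' : Set (Fin k → ℝ × ℝ), IsCompact K' ∧ K' ⊆ Ω ∧ ∀ x ∉ K', φ t x = x := by

  have ha0 : a ≠ 0 := by intro h; rw [h] at ha; linarith
  have hcpos : ∀ t, (0:ℝ) < cFun a t := fun t => lt_of_lt_of_le one_pos (cFun_ge a t ha)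
  have hcne : ∀ t, cFun a t ≠ 0 := fun t => (hcpos t).ne'
  have hsymp : ∀ t, IsSymplectomorph (fam a Ψt Ψ t) := by
    intro t
    by_cases h : clampI t ≤ 1/2
    · have he : fam a Ψt Ψ t = fun x => a⁻¹ • Ψt (2 * clampI t) (a • x) := by
        funext x; simp only [fam, if_pos h]
      rw [he]; exact isSymplecto_conj a ha0 _ (hΨtsymp _)
    · have he : fam a Ψt Ψ t = fun x => (cFun a t)⁻¹ • Ψ (cFun a t • x) := by
        funext x; simp only [fam, if_neg h]
      rw [he]; exact isSymplecto_conj _ (hcne t) _ hΨsymp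
  have hsupp : ∀ t, ∃ K' : Set (Fin k → ℝ × ℝ),
      IsCompact K' ∧ K' ⊆ Ω ∧ ∀ x ∉ K', fam a Ψt Ψ t x = x := by
    intro t
    by_cases h : clampI t ≤ 1/2
    · refine ⟨a⁻¹ • K, ?_, ?_, ?_⟩
      · rw [← Set.image_smul]; exact hK.image (continuous_const_smul _)
      · rintro y ⟨x, hx, rfl⟩
        obtain ⟨z, hz, rfl⟩ := hKa hx
        simpa [smul_smul, inv_mul_cancel₀ ha0] using hz
      · intro x hx
        simp only [fam, if_pos h]
        exact conj_support a ha0 _ K (hΨtsupp _) x hx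
    · refine ⟨(cFun a t)⁻¹ • KΨ, ?_, ?_, ?_⟩
      · rw [← Set.image_smul]; exact hKΨ.image (continuous_const_smul _)
      · rintro y ⟨x, hx, rfl⟩
        refine hstar x (hKΨΩ hx) _ ⟨?_, ?_⟩
        · exact (inv_pos.mpr (hcpos t)).le
        · exact (inv_le_one₀ (hcpos t)).mpr (cFun_ge a t ha)
      · intro x hx
        simp only [fam, if_neg h]
        exact conj_support _ (hcne t) _ KΨ hΨsupp x hx
  refine ⟨fam a Ψt Ψ, ?_, ?_, ?_, hsymp, ?_, hsupp⟩
  · have hF : Continuous fun p : ℝ × (Fin k → ℝ × ℝ) =>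
        a⁻¹ • Ψt (2 * clampI p.1) (a • p.2) :=
      (continuous_const (y := a⁻¹)).smul (hΨtcont.comp
        (((continuous_const (y := (2:ℝ))).mul (clampI_cont.comp continuous_fst)).prodMk
          ((continuous_const (y := a)).smul continuous_snd)))
    have hG : Continuous fun p : ℝ × (Fin k → ℝ × ℝ) =>
        (cFun a p.1)⁻¹ • Ψ (cFun a p.1 • p.2) :=
      (((cFun_cont a).comp continuous_fst).inv₀ (fun p => hcne p.1)).smul
        (hΨsymp.1.continuous.comp (((cFun_cont a).comp continuous_fst).smul continuous_snd))
    have hbd : ∀ p : ℝ × (Fin k → ℝ × ℝ), clampI p.1 = 1/2 →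
        a⁻¹ • Ψt (2 * clampI p.1) (a • p.2) = (cFun a p.1)⁻¹ • Ψ (cFun a p.1 • p.2) := by
      intro p hp
      have hcf : cFun a p.1 = a := by unfold cFun; rw [hp]; ring
      rw [hp, hcf]
      norm_num [h1]
    exact hF.if_le hG (clampI_cont.comp continuous_fst) continuous_const hbd
  · have hcl : clampI 0 = 0 := by norm_num [clampI]
    funext x
    simp only [fam, hcl]
    norm_num [h0, smul_smul, inv_mul_cancel₀ ha0]
  · have hcl : clampI 1 = 1 := by norm_num [clampI]
    have hcf : cFun a 1 = 1 := by unfold cFun; rw [hcl]; ring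
    funext x
    simp only [fam, hcl, hcf]
    norm_num
  · intro t
    obtain ⟨K', _, hK'Ω, hs⟩ := hsupp t
    exact image_eq_of_support (hsymp t).2.1 hK'Ω hs
end

section
/- Let P₀ ⊂ ℝ³ = {x₁ = 0} be obtained by rotating a set Q ⊂ {x₁ = x₄ = 0} (lying in the (x₂,x₃)-plane with x₃ ≥ 0) about the origin in the (x₃,x₄)-plane, and let P = [-1/2,1/2] × P₀ ⊂ ℝ⁴. Let σ : [0,∞) → [0,∞) be a smooth function such that Q ⊂ {(0,s,t,0) : t ≥ 0, σ(t) - 1/2 ≤ s ≤ σ(t) + 1/2 + ε}, and suppose Q ⊂ {x₃ ≤ M}. If P is invariant under rotation about the origin in the (x₃,x₄)-plane, then the image of P under the shear map (x₁,x₂,x₃,x₄) ↦ (x₁, x₂ - σ(√(x₃²+x₄²)), x₃, x₄) is contained in [-1/2, 1/2+ε]² × B²(πM²) — a subset of the cylinder of capacity (1+ε)². -/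
/-- let `Q` lie in the `(x₂,x₃)`-half-plane `{x₃ ≥ 0}`, pinched between
the graphs `x₂ = σ(x₃) - 1/2` and `x₂ = σ(x₃) + 1/2 + ε`, and contained in `{x₃ ≤ M}`.
Let `P₀` be obtained by rotating `Q` about the origin in the `(x₃,x₄)`-plane and
`P = [-1/2,1/2] × P₀` (so `P` is invariant under these rotations).  Then the shear
`(x₁,x₂,x₃,x₄) ↦ (x₁, x₂ - σ(√(x₃²+x₄²)), x₃, x₄)` maps `P` into
`[-1/2, 1/2+ε]² × B̄²(πM²)`, a subset of the cylinder of capacity `(1+ε)²`. -/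
theorem stmt18 (Q : Set (ℝ × ℝ)) (σ : ℝ → ℝ) (ε M : ℝ) (hε : 0 < ε) (hM : 0 < M)
    (hQpos : ∀ q ∈ Q, 0 ≤ q.2)
    (hQσ : ∀ q ∈ Q, σ q.2 - 1 / 2 ≤ q.1 ∧ q.1 ≤ σ q.2 + 1 / 2 + ε)
    (hQM : ∀ q ∈ Q, q.2 ≤ M) :
    -- `P = [-1/2,1/2] × P₀`, where `(x₂,x₃,x₄) ∈ P₀ ↔ (x₂, √(x₃²+x₄²)) ∈ Q`:
    let P : Set ((ℝ × ℝ) × (ℝ × ℝ)) :=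
      {p | p.1.1 ∈ Set.Icc (-(1 / 2) : ℝ) (1 / 2) ∧
           (p.1.2, Real.sqrt (p.2.1 ^ 2 + p.2.2 ^ 2)) ∈ Q}
    (fun p : (ℝ × ℝ) × (ℝ × ℝ) =>
        ((p.1.1, p.1.2 - σ (Real.sqrt (p.2.1 ^ 2 + p.2.2 ^ 2))), p.2)) '' P ⊆
      {p : (ℝ × ℝ) × (ℝ × ℝ) |
        p.1.1 ∈ Set.Icc (-(1 / 2) : ℝ) (1 / 2 + ε) ∧
        p.1.2 ∈ Set.Icc (-(1 / 2) : ℝ) (1 / 2 + ε) ∧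
        p.2.1 ^ 2 + p.2.2 ^ 2 ≤ M ^ 2} := by
  intro P
  rintro _ ⟨p, ⟨hx1, hQmem⟩, rfl⟩
  obtain ⟨hl, hr⟩ := hQσ _ hQmem
  have hpos := hQpos _ hQmem
  have hle := hQM _ hQmem
  have hsq : Real.sqrt (p.2.1 ^ 2 + p.2.2 ^ 2) ^ 2 = p.2.1 ^ 2 + p.2.2 ^ 2 :=
    Real.sq_sqrt (by positivity)
  refine ⟨⟨hx1.1.trans (by linarith), hx1.2.trans (by linarith)⟩,
    ⟨by simpa using by linarith, by simpa using by linarith⟩, ?_⟩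
  calc p.2.1 ^ 2 + p.2.2 ^ 2 = _ ^ 2 := hsq.symm
    _ ≤ M ^ 2 := by nlinarith [Real.sqrt_nonneg (p.2.1 ^ 2 + p.2.2 ^ 2)]
end
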